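/- Let α_1,α_2 be positive rationals, d a rational, and g ∈ ℂ[x_1,x_2] squarefree, weighted homogeneous of degree d for the weights (α_1,α_2), with g ∈ (x_1,x_2)^3. Let u ∈ ℂ[x_1,x_2,x_3] and v ∈ ℂ[x_2,x_3] be the unique polynomials with x_3·g'_{x_1} + g'_{x_2} = u·x_1 − v·x_2, set h = (x_1−x_2x_3)·g, and define the derivations δ_1 = α_1x_1∂_1 + α_2x_2∂_2 + (α_1−α_2)x_3∂_3, δ_2 = g'_{x_2}∂_1 − g'_{x_1}∂_2 + (x_3u−v)∂_3, δ_3 = (x_1−x_2x_3)∂_3 of R = ℂ[x_1,x_2,x_3]. Then the R-module Der(−log h) = {δ : δ is a ℂ-linear derivation of R with δ(h) ∈ (h)} is a free R-module with basis {δ_1, δ_2, δ_3}. -/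

import Mathlib

/-!
Saito's criterion. Let `η₁, …, ηₙ` be derivations of `K[x₁, …, xₙ]`, `char K = 0`, with matrix
`M = (ηᵢ(xⱼ))`, and let `h` be squarefree. If every `ηᵢ` is logarithmic along `h`, then
`adj(M) · M · ∇h = det M · ∇h` has entries in `(h)`, so `h ∣ det M`: a squarefree `h` dividing
`f · ∂ⱼh` for all `j` divides `f`, because an irreducible `q` cannot divide all of its own partial
derivatives (they have lower degree and are not all zero). If moreover `det M = c · h` with
`c ≠ 0` constant, Cramer's rule writes a logarithmic `δ` as `∑ᵢ (Δᵢ / det M) ηᵢ`, where `Δᵢ` is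
the determinant with row `i` replaced by `δ`; as `h ∣ Δᵢ`, the coefficients are polynomials.

For `h = (x₁ - x₂x₃)g`: `δ₁(h) = (α₁ + d)h` by the weighted Euler identity, `δ₂(h) = u h` by the
identity defining `u` and `v`, and `δ₃(h) = -x₂ h`. The matrix of `δ₁, δ₂, δ₃` is block triangular
with determinant `-(x₁ - x₂x₃)(α₁x₁g'_{x₁} + α₂x₂g'_{x₂}) = -d h`, and `d > 0` since `g` has no
constant term. Finally `h` is squarefree, as `x₁ - x₂x₃` is prime and does not divide `g`, which
does not involve `x₃`.
-/

open MvPolynomial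

namespace MvPolynomial

section Degree

theorem degreeOf_pderiv_lt {R σ : Type*} [CommSemiring R] {p : MvPolynomial σ R} {i : σ}
    (hp : pderiv i p ≠ 0) : degreeOf i (pderiv i p) < degreeOf i p := by
  have hsucc : ∀ m ∈ (pderiv i p).support, m i + 1 ≤ degreeOf i p := by
    intro m hm
    have hcoeff : coeff (m + Finsupp.single i 1) p ≠ 0 := by
      rw [mem_support_iff, coeff_pderiv] at hm
      exact left_ne_zero_of_mul hm
    simpa using monomial_le_degreeOf i (mem_support_iff.mpr hcoeff)
  obtain ⟨m, hm⟩ := support_nonempty.mpr hp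
  have hpos := hsucc m hm
  have hle : degreeOf i (pderiv i p) ≤ degreeOf i p - 1 :=
    degreeOf_le_iff.mpr fun n hn => Nat.le_sub_one_of_lt (hsucc n hn)
  omega

variable {R σ : Type*} [CommRing R] [IsDomain R]

theorem degreeOf_le_degreeOf_of_dvd {p q : MvPolynomial σ R} (hpq : p ∣ q) (hq : q ≠ 0)
    (i : σ) : degreeOf i p ≤ degreeOf i q := by
  obtain ⟨r, rfl⟩ := hpq
  rw [degreeOf_mul_eq (left_ne_zero_of_mul hq) (right_ne_zero_of_mul hq)]
  exact Nat.le_add_right _ _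

theorem pderiv_eq_zero_of_dvd_pderiv {p : MvPolynomial σ R} {i : σ} (h : p ∣ pderiv i p) :
    pderiv i p = 0 := by
  by_contra hp
  exact (degreeOf_pderiv_lt hp).not_ge (degreeOf_le_degreeOf_of_dvd h hp i)

theorem eq_C_of_forall_pderiv_eq_zero [CharZero R] {p : MvPolynomial σ R}
    (h : ∀ i, pderiv i p = 0) : p = C (coeff 0 p) := by
  classical
  ext m
  rw [coeff_C]
  split_ifs with hm
  · rw [hm]
  obtain ⟨i, hi⟩ : ∃ i, m i ≠ 0 := by
    by_contra! h0
    exact hm (Finsupp.ext h0).symm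
  have hcoeff := congrArg (coeff (m - Finsupp.single i 1)) (h i)
  rw [coeff_pderiv, coeff_zero, Finsupp.sub_add_single_one_cancel hi] at hcoeff
  exact (mul_eq_zero.mp hcoeff).resolve_right (by norm_cast)

theorem pderiv_eq_zero_of_forall_mem_support {R σ : Type*} [CommSemiring R]
    {p : MvPolynomial σ R} {i : σ} (h : ∀ m ∈ p.support, m i = 0) : pderiv i p = 0 :=
  pderiv_eq_zero_of_notMem_vars fun hi => by
    obtain ⟨m, hm, hmi⟩ := (mem_vars_iff_mem_support i).mp hi
    exact Finsupp.mem_support_iff.mp hmi (h m hm)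

end Degree

section Squarefree

variable {K σ : Type*} [Field K] [CharZero K]

theorem exists_not_dvd_pderiv_of_irreducible {q : MvPolynomial σ K} (hq : Irreducible q) :
    ∃ i, ¬ q ∣ pderiv i q := by
  by_contra! h
  have hC := eq_C_of_forall_pderiv_eq_zero fun i => pderiv_eq_zero_of_dvd_pderiv (h i)
  have hc : coeff 0 q ≠ 0 := fun h0 => hq.ne_zero (by rw [hC, h0, map_zero])
  exact hq.not_isUnit (hC ▸ (isUnit_iff_ne_zero.mpr hc).map C)

theorem dvd_of_forall_dvd_mul_pderiv {h : MvPolynomial σ K} (hh : Squarefree h)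
    {f : MvPolynomial σ K} (hf : ∀ i, h ∣ f * pderiv i h) : h ∣ f := by
  induction h using WfDvdMonoid.induction_on_irreducible with
  | zero => exact absurd hh not_squarefree_zero
  | unit u hu => exact hu.dvd
  | mul a q _ hq ih =>
    have hrel : IsRelPrime q a := IsRelPrime.of_squarefree_mul hh
    have hexpand : ∀ i, f * pderiv i (q * a) = a * (f * pderiv i q) + q * (f * pderiv i a) := by
      intro i
      rw [pderiv_mul]
      ring
    have haf : a ∣ f := ih hh.of_mul_right fun i => by
      have ha := (dvd_mul_left a q).trans (hf i)
      rw [hexpand, dvd_add_right (dvd_mul_right a _)] at ha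
      exact hrel.symm.dvd_of_dvd_mul_left ha
    obtain ⟨i, hi⟩ := exists_not_dvd_pderiv_of_irreducible hq
    have hqf : q ∣ f * pderiv i q := by
      have hq' := (dvd_mul_right q a).trans (hf i)
      rw [hexpand, dvd_add_left (dvd_mul_right q _)] at hq'
      exact hrel.dvd_of_dvd_mul_left hq'
    have hq_prime := UniqueFactorizationMonoid.irreducible_iff_prime.mp hq
    exact hrel.mul_dvd ((hq_prime.dvd_mul.mp hqf).resolve_right hi) haf

end Squarefree

theorem _root_.Derivation.finset_sum_apply {R A M ι : Type*} [CommSemiring R] [CommSemiring A]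
    [Algebra R A] [AddCommMonoid M] [Module A M] [Module R M] (s : Finset ι)
    (D : ι → Derivation R A M) (a : A) : (∑ i ∈ s, D i) a = ∑ i ∈ s, D i a := by
  simp only [← Derivation.coeFnAddMonoidHom_apply, map_sum, Finset.sum_apply]

theorem derivation_apply_eq_sum_mul_pderiv {R σ : Type*} [CommSemiring R] [Fintype σ]
    (D : Derivation R (MvPolynomial σ R) (MvPolynomial σ R)) (p : MvPolynomial σ R) :
    D p = ∑ i, D (X i) * pderiv i p := by
  classical
  suffices D = ∑ i, D (X i) • pderiv i by
    conv_lhs => rw [this]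
    simp [Derivation.finset_sum_apply]
  refine derivation_ext fun j => ?_
  simp [Derivation.finset_sum_apply, pderiv_X, Pi.single_apply]

theorem sum_C_mul_X_mul_pderiv_of_forall_weight_eq {R σ : Type*} [CommSemiring R] [Fintype σ]
    (w : σ → R) (d : R) {φ : MvPolynomial σ R} (h : ∀ m ∈ φ.support, ∑ i, w i * m i = d) :
    ∑ i, C (w i) * X i * pderiv i φ = C d * φ := by
  conv_lhs => rw [φ.as_sum]
  conv_rhs => rw [φ.as_sum]
  simp only [map_sum, Finset.mul_sum]
  rw [Finset.sum_comm]
  refine Finset.sum_congr rfl fun m hm => ?_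
  simp only [mul_assoc, X_mul_pderiv_monomial, smul_monomial, C_mul_monomial, ← map_sum, ← h m hm,
    Finset.sum_mul, nsmul_eq_mul]

section Saito

open Matrix

variable {K σ : Type*} [Field K]

noncomputable def saitoMatrix (η : σ → Derivation K (MvPolynomial σ K) (MvPolynomial σ K)) :
    Matrix σ σ (MvPolynomial σ K) :=
  Matrix.of fun i j => η i (X j)

variable {η : σ → Derivation K (MvPolynomial σ K) (MvPolynomial σ K)} {h : MvPolynomial σ K}

theorem saitoMatrix_mulVec_pderiv [Fintype σ] :
    saitoMatrix η *ᵥ (fun j => pderiv j h) = fun i => η i h := by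
  ext1 i
  simp [mulVec, dotProduct, saitoMatrix, derivation_apply_eq_sum_mul_pderiv (η i) h]

theorem vecMul_saitoMatrix [Fintype σ] (b : σ → MvPolynomial σ K) :
    b ᵥ* saitoMatrix η = fun j => (∑ i, b i • η i) (X j) := by
  ext1 j
  simp [vecMul, dotProduct, saitoMatrix, Derivation.finset_sum_apply]

theorem updateRow_saitoMatrix [DecidableEq σ] (i : σ)
    (δ : Derivation K (MvPolynomial σ K) (MvPolynomial σ K)) :
    (saitoMatrix η).updateRow i (fun j => δ (X j)) = saitoMatrix (Function.update η i δ) := by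
  ext k j
  by_cases hk : k = i
  · subst hk
    simp [saitoMatrix]
  · simp [saitoMatrix, hk]

theorem linearIndependent_of_det_saitoMatrix_ne_zero [Fintype σ] [DecidableEq σ]
    (hdet : (saitoMatrix η).det ≠ 0) : LinearIndependent (MvPolynomial σ K) η := by
  rw [Fintype.linearIndependent_iff]
  intro b hb
  have hvec : b ᵥ* saitoMatrix η = 0 := by
    rw [vecMul_saitoMatrix, hb]
    rfl
  suffices b = 0 by simp [this]
  by_contra hb0
  exact hdet (exists_vecMul_eq_zero_iff.mp ⟨b, hb0, hvec⟩)

variable [Fintype σ] [DecidableEq σ] [CharZero K]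

theorem dvd_det_saitoMatrix (hh : Squarefree h) (hη : ∀ i, h ∣ η i h) :
    h ∣ (saitoMatrix η).det := by
  choose p hp using hη
  refine dvd_of_forall_dvd_mul_pderiv hh fun j => ?_
  have hadj : (saitoMatrix η).det • (fun j => pderiv j h)
      = (saitoMatrix η).adjugate *ᵥ fun i => η i h := by
    rw [← saitoMatrix_mulVec_pderiv (η := η), mulVec_mulVec, adjugate_mul, smul_mulVec,
      one_mulVec]
  have hj := congrFun hadj j
  simp only [Pi.smul_apply, smul_eq_mul, mulVec, dotProduct, hp] at hj
  rw [hj]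
  exact Finset.dvd_sum fun k _ => (dvd_mul_right h (p k)).mul_left _

theorem mem_span_of_det_saitoMatrix_eq (hh : Squarefree h) (hη : ∀ i, h ∣ η i h)
    {c : K} (hc : c ≠ 0) (hdet : (saitoMatrix η).det = C c * h)
    {δ : Derivation K (MvPolynomial σ K) (MvPolynomial σ K)} (hδ : h ∣ δ h) :
    δ ∈ Submodule.span (MvPolynomial σ K) (Set.range η) := by
  set w := fun j => δ (X j)
  have hcramer : ∀ i, h ∣ cramer (saitoMatrix η)ᵀ w i := by
    intro i
    rw [cramer_transpose_apply, updateRow_saitoMatrix]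
    refine dvd_det_saitoMatrix hh fun k => ?_
    by_cases hk : k = i
    · subst hk
      simpa using hδ
    · simpa [hk] using hη k
  choose b hb using hcramer
  have hcomb : b ᵥ* saitoMatrix η = (C c : MvPolynomial σ K) • w := by
    have hc : h • (b ᵥ* saitoMatrix η) = h • ((C c : MvPolynomial σ K) • w) := by
      have hcr := mulVec_cramer (saitoMatrix η)ᵀ w
      rwa [mulVec_transpose, det_transpose, hdet, show cramer (saitoMatrix η)ᵀ w = h • b by
        ext i; simp [hb], smul_vecMul, mul_comm, mul_smul] at hcr
    exact smul_right_injective _ hh.ne_zero hc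
  rw [Submodule.mem_span_range_iff_exists_fun]
  refine ⟨fun i => C c⁻¹ * b i, derivation_ext fun j => ?_⟩
  have hj := congrFun hcomb j
  rw [vecMul_saitoMatrix] at hj
  simp only [mul_smul, ← Finset.smul_sum, Derivation.smul_apply, hj, Pi.smul_apply, smul_eq_mul,
    ← mul_assoc, ← map_mul, inv_mul_cancel₀ hc, map_one, one_mul, w]

end Saito

section ThreeVariables

variable {R : Type*} [CommRing R] [IsDomain R]

theorem prime_X_sub_X_mul_X : Prime (X 0 - X 1 * X 2 : MvPolynomial (Fin 3) R) := by
  rw [← MulEquiv.prime_iff (finSuccEquiv R 2)]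
  have hX : (X 1 * X 2 : MvPolynomial (Fin 3) R) = X (Fin.succ 0) * X (Fin.succ 1) := rfl
  rw [map_sub, hX, map_mul, finSuccEquiv_X_zero, finSuccEquiv_X_succ, finSuccEquiv_X_succ,
    ← map_mul]
  exact Polynomial.prime_X_sub_C _

theorem X_sub_X_mul_X_not_dvd {g : MvPolynomial (Fin 3) R} (hg : g ≠ 0)
    (hgx3 : ∀ m ∈ g.support, m 2 = 0) : ¬ X 0 - X 1 * X 2 ∣ g := by
  intro hdvd
  have hmem : Finsupp.single 1 1 + Finsupp.single 2 1
      ∈ (X 0 - X 1 * X 2 : MvPolynomial (Fin 3) R).support := by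
    rw [mem_support_iff, coeff_sub, X, X, X, monomial_mul, coeff_monomial, coeff_monomial,
      if_neg, if_pos rfl]
    · simp
    · intro h
      simpa using DFunLike.congr_fun h 1
  have hdeg : 1 ≤ degreeOf 2 g := by
    simpa using (monomial_le_degreeOf 2 hmem).trans (degreeOf_le_degreeOf_of_dvd hdvd hg 2)
  have hdeg_g : degreeOf 2 g ≤ 0 := degreeOf_le_iff.mpr fun m hm => (hgx3 m hm).le
  omega

theorem squarefree_X_sub_X_mul_X_mul {K : Type*} [Field K] {g : MvPolynomial (Fin 3) K}
    (hg : Squarefree g)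
    (hgx3 : ∀ m ∈ g.support, m 2 = 0) : Squarefree ((X 0 - X 1 * X 2) * g) :=
  squarefree_mul_iff.mpr ⟨prime_X_sub_X_mul_X.irreducible.isRelPrime_iff_not_dvd.mpr
    (X_sub_X_mul_X_not_dvd hg.ne_zero hgx3), prime_X_sub_X_mul_X.squarefree, hg⟩

end ThreeVariables

theorem weight_pos_of_mem_span_X {α1 α2 d : ℚ} (hα1 : 0 < α1) (hα2 : 0 < α2)
    {g : MvPolynomial (Fin 3) ℂ} (hg : g ≠ 0) (hgx3 : ∀ m ∈ g.support, m 2 = 0)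
    (hwh : ∀ m ∈ g.support, α1 * (m 0 : ℚ) + α2 * (m 1 : ℚ) = d)
    (hmem : g ∈ Ideal.span {(X 0 : MvPolynomial (Fin 3) ℂ), X 1}) : 0 < d := by
  obtain ⟨m, hm⟩ := support_nonempty.mpr hg
  have hconst : constantCoeff g = 0 := by
    have : Ideal.span {(X 0 : MvPolynomial (Fin 3) ℂ), X 1} ≤ RingHom.ker constantCoeff := by
      simp [Ideal.span_le, Set.insert_subset_iff]
    exact this hmem
  have hm01 : m 0 ≠ 0 ∨ m 1 ≠ 0 := by
    by_contra! h
    have hm0 : m = 0 := by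
      ext i
      fin_cases i <;> simp [h, hgx3 m hm]
    exact mem_support_iff.mp hm (by rwa [hm0, ← constantCoeff_eq])
  rw [← hwh m hm]
  rcases hm01 with h | h
  · exact add_pos_of_pos_of_nonneg (by positivity) (by positivity)
  · exact add_pos_of_nonneg_of_pos (by positivity) (by positivity)

end MvPolynomial

/-- The submodule of logarithmic derivations `Der(-log h)`: `ℂ`-linear derivations
`δ` of `ℂ[x₁,x₂,x₃]` with `δ(h) ∈ (h)`. -/
noncomputable def logDer (h : MvPolynomial (Fin 3) ℂ) :
    Submodule (MvPolynomial (Fin 3) ℂ)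
      (Derivation ℂ (MvPolynomial (Fin 3) ℂ) (MvPolynomial (Fin 3) ℂ)) where
  carrier := {δ | δ h ∈ Ideal.span {h}}
  zero_mem' := by simp
  add_mem' := by
    intro a b ha hb
    simpa using Ideal.add_mem _ ha hb
  smul_mem' := by
    intro r δ hδ
    simpa using Ideal.mul_mem_left _ r hδ

theorem span_eq_logDer_of_det_saitoMatrix_eq {h : MvPolynomial (Fin 3) ℂ} (hh : Squarefree h)
    {η : Fin 3 → Derivation ℂ (MvPolynomial (Fin 3) ℂ) (MvPolynomial (Fin 3) ℂ)}
    (hη : ∀ i, h ∣ η i h) {c : ℂ} (hc : c ≠ 0) (hdet : (saitoMatrix η).det = C c * h) :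
    Submodule.span (MvPolynomial (Fin 3) ℂ) (Set.range η) = logDer h := by
  refine le_antisymm (Submodule.span_le.mpr ?_) fun δ hδ => ?_
  · rintro _ ⟨i, rfl⟩
    exact Ideal.mem_span_singleton.mpr (hη i)
  · exact mem_span_of_det_saitoMatrix_eq hh hη hc hdet (Ideal.mem_span_singleton.mp hδ)

section Derivations

variable (a1 a2 : ℂ) (g u v : MvPolynomial (Fin 3) ℂ)

noncomputable def delta : Fin 3 → Derivation ℂ (MvPolynomial (Fin 3) ℂ) (MvPolynomial (Fin 3) ℂ) :=
  ![mkDerivation ℂ ![C a1 * X 0, C a2 * X 1, C (a1 - a2) * X 2],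
    mkDerivation ℂ ![pderiv 1 g, - pderiv 0 g, X 2 * u - v],
    mkDerivation ℂ ![0, 0, X 0 - X 1 * X 2]]

variable {a1 a2 g u v} {d : ℂ}

theorem dvd_delta_apply
    (hEuler : C a1 * X 0 * pderiv 0 g + C a2 * X 1 * pderiv 1 g = C d * g) (hg2 : pderiv 2 g = 0)
    (huv : X 2 * pderiv 0 g + pderiv 1 g = u * X 0 - v * X 1) (i : Fin 3) :
    (X 0 - X 1 * X 2) * g ∣ delta a1 a2 g u v i ((X 0 - X 1 * X 2) * g) := by
  fin_cases i <;>
    simp only [delta, Fin.zero_eta, Fin.mk_one, Fin.reduceFinMk, Matrix.cons_val,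
      Derivation.leibniz, smul_eq_mul, map_sub] <;>
    rw [derivation_apply_eq_sum_mul_pderiv _ g, Fin.sum_univ_three] <;>
    simp only [mkDerivation_X, Matrix.cons_val, hg2, mul_zero, add_zero]
  · exact Dvd.intro (C d + C a1) (by linear_combination -(X 0 - X 1 * X 2) * hEuler)
  · exact Dvd.intro u (by linear_combination -g * huv)
  · exact Dvd.intro (-X 1) (by ring)

theorem det_saitoMatrix_delta
    (hEuler : C a1 * X 0 * pderiv 0 g + C a2 * X 1 * pderiv 1 g = C d * g) :
    (saitoMatrix (delta a1 a2 g u v)).det = C (-d) * ((X 0 - X 1 * X 2) * g) := by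
  simp only [saitoMatrix, delta, Matrix.det_fin_three, Matrix.of_apply, Matrix.cons_val,
    mkDerivation_X, C_sub, C_neg]
  linear_combination (X 1 * X 2 - X 0) * hEuler

end Derivations

theorem stmt_7_general (α1 α2 d : ℚ) (hα1 : 0 < α1) (hα2 : 0 < α2)
    (g u v : MvPolynomial (Fin 3) ℂ)
    (hgx3 : ∀ m ∈ g.support, m 2 = 0)
    (hsq : Squarefree g)
    (hwh : ∀ m ∈ g.support, α1 * (m 0 : ℚ) + α2 * (m 1 : ℚ) = d)
    (hcube : g ∈ (Ideal.span {(X 0 : MvPolynomial (Fin 3) ℂ), X 1}) ^ 3)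
    (huv : X 2 * pderiv 0 g + pderiv 1 g = u * X 0 - v * X 1) :
    ∀ δ1 δ2 δ3 : Derivation ℂ (MvPolynomial (Fin 3) ℂ) (MvPolynomial (Fin 3) ℂ),
      δ1 = mkDerivation ℂ
          ![C ((α1 : ℂ)) * X 0, C ((α2 : ℂ)) * X 1, C ((α1 : ℂ) - (α2 : ℂ)) * X 2] →
      δ2 = mkDerivation ℂ ![pderiv 1 g, - pderiv 0 g, X 2 * u - v] →
      δ3 = mkDerivation ℂ ![0, 0, X 0 - X 1 * X 2] →
      Submodule.span (MvPolynomial (Fin 3) ℂ) {δ1, δ2, δ3}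
          = logDer ((X 0 - X 1 * X 2) * g) ∧
        LinearIndependent (MvPolynomial (Fin 3) ℂ) ![δ1, δ2, δ3] := by
  intro δ1 δ2 δ3 h1 h2 h3
  have hδ : ![δ1, δ2, δ3] = delta α1 α2 g u v := by
    rw [h1, h2, h3]
    rfl
  have hrange : {δ1, δ2, δ3} = Set.range (delta α1 α2 g u v) := by
    rw [← hδ, Matrix.range_cons, Matrix.range_cons, Matrix.range_cons, Matrix.range_empty]
    simp only [Set.union_empty, Set.singleton_union]
  have hg2 : pderiv 2 g = 0 := pderiv_eq_zero_of_forall_mem_support hgx3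
  have hd : (d : ℂ) ≠ 0 := by
    exact_mod_cast (weight_pos_of_mem_span_X hα1 hα2 hsq.ne_zero hgx3 hwh
      (Ideal.pow_le_self three_ne_zero hcube)).ne'
  have hEuler : C (α1 : ℂ) * X 0 * pderiv 0 g + C (α2 : ℂ) * X 1 * pderiv 1 g = C (d : ℂ) * g := by
    simpa [Fin.sum_univ_three, hg2] using sum_C_mul_X_mul_pderiv_of_forall_weight_eq
      ![(α1 : ℂ), α2, 0] d fun m hm => by
        simpa [Fin.sum_univ_three] using congr(($(hwh m hm) : ℂ))
  have hsqh := squarefree_X_sub_X_mul_X_mul hsq hgx3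
  have hdet := det_saitoMatrix_delta (u := u) (v := v) hEuler
  rw [hrange, hδ]
  refine ⟨span_eq_logDer_of_det_saitoMatrix_eq hsqh (dvd_delta_apply hEuler hg2 huv)
    (neg_ne_zero.mpr hd) hdet, linearIndependent_of_det_saitoMatrix_ne_zero ?_⟩
  rw [hdet]
  exact mul_ne_zero (by simpa using hd) hsqh.ne_zero

/-- Lemma 3.7(i): for `g ∈ ℂ[x₁,x₂]` squarefree, weighted homogeneous of degree
`d` for positive rational weights `(α₁,α₂)`, with `g ∈ (x₁,x₂)³`, and
`h = (x₁-x₂x₃)·g`, the module `Der(-log h)` is free with basis `{δ₁,δ₂,δ₃}`,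
where `δ₁ = α₁x₁∂₁ + α₂x₂∂₂ + (α₁-α₂)x₃∂₃`,
`δ₂ = g'_{x₂}∂₁ - g'_{x₁}∂₂ + (x₃u-v)∂₃`, `δ₃ = (x₁-x₂x₃)∂₃`.
Variables `0,1,2` of `Fin 3` stand for `x₁,x₂,x₃`. -/
theorem stmt_7 (α1 α2 d : ℚ) (hα1 : 0 < α1) (hα2 : 0 < α2)
    (g u v : MvPolynomial (Fin 3) ℂ)
    (hgx3 : ∀ m ∈ g.support, m 2 = 0)
    (hsq : Squarefree g)
    (hwh : ∀ m ∈ g.support, α1 * (m 0 : ℚ) + α2 * (m 1 : ℚ) = d)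
    (hcube : g ∈ (Ideal.span {(X 0 : MvPolynomial (Fin 3) ℂ), X 1}) ^ 3)
    (hv : ∀ m ∈ v.support, m 0 = 0)
    (huv : X 2 * pderiv 0 g + pderiv 1 g = u * X 0 - v * X 1) :
    ∀ δ1 δ2 δ3 : Derivation ℂ (MvPolynomial (Fin 3) ℂ) (MvPolynomial (Fin 3) ℂ),
      δ1 = mkDerivation ℂ
          ![C ((α1 : ℂ)) * X 0, C ((α2 : ℂ)) * X 1, C ((α1 : ℂ) - (α2 : ℂ)) * X 2] →
      δ2 = mkDerivation ℂ ![pderiv 1 g, - pderiv 0 g, X 2 * u - v] →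
      δ3 = mkDerivation ℂ ![0, 0, X 0 - X 1 * X 2] →
      Submodule.span (MvPolynomial (Fin 3) ℂ) {δ1, δ2, δ3}
          = logDer ((X 0 - X 1 * X 2) * g) ∧
        LinearIndependent (MvPolynomial (Fin 3) ℂ) ![δ1, δ2, δ3] :=
  stmt_7_general α1 α2 d hα1 hα2 g u v hgx3 hsq hwh hcube huv
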